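/- Asymmetric tame product estimate: let n ≥ 1 and s ≥ s₀ > n/2. There exist constants C(s₀), C(s) (depending only on s₀, s, n) such that for all u, v : ℤ^n → ℂ with ‖u‖_s, ‖v‖_s < ∞, the convolution u∗v (defined by (u∗v)_k := Σ_{k'∈ℤ^n} u_{k−k'} v_{k'}) is well defined and satisfies ‖u∗v‖_s ≤ C(s₀) ‖u‖_s ‖v‖_{s₀} + C(s) ‖u‖_{s₀} ‖v‖_s. (This is the Fourier-coefficient form of the tame product estimate ‖uv‖_{H^s} ≤ C(s₀)‖u‖_{H^s}‖v‖_{H^{s₀}} + C(s)‖u‖_{H^{s₀}}‖v‖_{H^s} on the torus 𝕋^n.) -/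

import Mathlib

/-!
The triangle inequality `⟨k⟩ ≤ ⟨k - k'⟩ + ⟨k'⟩` gives `⟨k⟩ˢ ≤ 2ˢ (⟨k - k'⟩ˢ + ⟨k'⟩ˢ)`, which puts
the whole weight on one factor at a time:
`‖u ∗ v‖ₛ ≤ 2ˢ (‖(⟨·⟩ˢ|u|) ∗ |v|‖_{ℓ²} + ‖|u| ∗ (⟨·⟩ˢ|v|)‖_{ℓ²})`.
Young's inequality `‖A ∗ B‖_{ℓ²} ≤ ‖A‖_{ℓ²} ‖B‖_{ℓ¹}` bounds this by
`‖u‖ₛ ‖v‖_{ℓ¹} + ‖u‖_{ℓ¹} ‖v‖ₛ`, and Cauchy–Schwarz gives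
`‖w‖_{ℓ¹} ≤ (∑ₖ ⟨k⟩^{-2s₀})^{1/2} ‖w‖_{s₀}`, the sum being finite since `2s₀ > n`.
The same `ℓ¹` bounds make the convolution sums absolutely convergent.
-/

open scoped ENNReal NNReal

/-- The weight `⟨k⟩ = max(1,|k|)` with `|k|` the sup norm of `k ∈ ℤⁿ`. -/
noncomputable def wgt {n : ℕ} (k : Fin n → ℤ) : ℝ≥0∞ :=
  ((max 1 (Finset.univ.sup fun i => (k i).natAbs) : ℕ) : ℝ≥0∞)

/-- The weighted ℓ² norm `‖u‖ₛ = (Σ_k ⟨k⟩^{2s}|u_k|²)^{1/2}` (possibly `+∞`). -/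
noncomputable def wnorm (n : ℕ) (s : ℝ) (u : (Fin n → ℤ) → ℂ) : ℝ≥0∞ :=
  (∑' k : Fin n → ℤ, wgt k ^ (2 * s) * (‖u k‖₊ : ℝ≥0∞) ^ (2 : ℕ)) ^ (1 / 2 : ℝ)

open MeasureTheory

section Ell2

variable {α : Type*}

noncomputable def ell2Norm (f : α → ℝ≥0∞) : ℝ≥0∞ := (∑' a, f a ^ 2) ^ (1 / 2 : ℝ)

lemma ell2Norm_sq (f : α → ℝ≥0∞) : ell2Norm f ^ 2 = ∑' a, f a ^ 2 := by
  rw [ell2Norm, ← ENNReal.rpow_natCast, ← ENNReal.rpow_mul]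
  norm_num

lemma le_ell2Norm (f : α → ℝ≥0∞) (a : α) : f a ≤ ell2Norm f := by
  rw [← ENNReal.pow_le_pow_left_iff two_ne_zero, ell2Norm_sq]
  exact ENNReal.le_tsum a

lemma ell2Norm_mono {f g : α → ℝ≥0∞} (h : f ≤ g) : ell2Norm f ≤ ell2Norm g := by
  unfold ell2Norm
  gcongr with a
  exact h a

lemma ell2Norm_const_mul (c : ℝ≥0∞) (f : α → ℝ≥0∞) :
    ell2Norm (fun a => c * f a) = c * ell2Norm f := by
  refine le_antisymm ?_ ?_ <;>
  · rw [← ENNReal.pow_le_pow_left_iff two_ne_zero, mul_pow, ell2Norm_sq, ell2Norm_sq]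
    simp only [mul_pow, ENNReal.tsum_mul_left, le_refl]

-- With the discrete σ-algebra, `∫⁻ a, f a ∂count = ∑' a, f a`, so Minkowski's and Hölder's
-- inequalities for `lintegral` apply to `ell2Norm`.
lemma ell2Norm_add_le (f g : α → ℝ≥0∞) : ell2Norm (f + g) ≤ ell2Norm f + ell2Norm g := by
  let _ : MeasurableSpace α := ⊤
  simpa only [ell2Norm, lintegral_count' measurable_from_top, ENNReal.rpow_two]
    using ENNReal.lintegral_Lp_add_le (μ := Measure.count)
      measurable_from_top.aemeasurable measurable_from_top.aemeasurable one_le_two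

lemma tsum_mul_le_ell2Norm_mul (f g : α → ℝ≥0∞) :
    ∑' a, f a * g a ≤ ell2Norm f * ell2Norm g := by
  let _ : MeasurableSpace α := ⊤
  simpa only [ell2Norm, lintegral_count' measurable_from_top, ENNReal.rpow_two, Pi.mul_apply]
    using ENNReal.lintegral_mul_le_Lp_mul_Lq Measure.count Real.HolderConjugate.two_two
      measurable_from_top.aemeasurable measurable_from_top.aemeasurable

lemma sq_tsum_mul_le_tsum_mul_tsum_sq_mul (f w : α → ℝ≥0∞) :
    (∑' a, f a * w a) ^ 2 ≤ (∑' a, w a) * ∑' a, f a ^ 2 * w a := by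
  have hw : ∀ a, (w a ^ (1 / 2 : ℝ)) ^ 2 = w a := fun a => by
    rw [← ENNReal.rpow_natCast, ← ENNReal.rpow_mul]; norm_num
  calc (∑' a, f a * w a) ^ 2
      = (∑' a, w a ^ (1 / 2 : ℝ) * (f a * w a ^ (1 / 2 : ℝ))) ^ 2 := by
        congr 1
        refine tsum_congr fun a => ?_
        rw [mul_left_comm, ← sq, hw]
    _ ≤ (ell2Norm (fun a => w a ^ (1 / 2 : ℝ)) *
          ell2Norm (fun a => f a * w a ^ (1 / 2 : ℝ))) ^ 2 := by
        gcongr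
        exact tsum_mul_le_ell2Norm_mul _ _
    _ = (∑' a, w a) * ∑' a, f a ^ 2 * w a := by
        simp only [mul_pow, ell2Norm_sq, hw]

end Ell2

section Convolution

variable {G : Type*} [AddCommGroup G]

noncomputable def discreteConv (A B : G → ℝ≥0∞) (k : G) : ℝ≥0∞ := ∑' j, A (k - j) * B j

lemma discreteConv_comm (A B : G → ℝ≥0∞) : discreteConv A B = discreteConv B A := by
  funext k
  rw [discreteConv, ← (Equiv.subLeft k).tsum_eq]
  simp only [discreteConv, Equiv.subLeft_apply, sub_sub_cancel, mul_comm]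

lemma discreteConv_le_tsum_mul_tsum (A B : G → ℝ≥0∞) (k : G) :
    discreteConv A B k ≤ (∑' j, A j) * ∑' j, B j :=
  calc discreteConv A B k ≤ ∑' j, A (k - j) * ∑' i, B i :=
        ENNReal.tsum_le_tsum fun j => mul_le_mul_right (ENNReal.le_tsum j) _
    _ = (∑' j, A j) * ∑' j, B j := by
        rw [ENNReal.tsum_mul_right, ← (Equiv.subLeft k).tsum_eq A]
        rfl

lemma ell2Norm_discreteConv_le (A B : G → ℝ≥0∞) :
    ell2Norm (discreteConv A B) ≤ ell2Norm A * ∑' j, B j := by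
  rw [← ENNReal.pow_le_pow_left_iff two_ne_zero, ell2Norm_sq, mul_pow, ell2Norm_sq]
  calc ∑' k, discreteConv A B k ^ 2 ≤ ∑' k, (∑' j, B j) * ∑' j, A (k - j) ^ 2 * B j :=
        ENNReal.tsum_le_tsum fun k => sq_tsum_mul_le_tsum_mul_tsum_sq_mul _ _
    _ = (∑' j, B j) * ∑' j, B j * ∑' k, A (k - j) ^ 2 := by
        rw [ENNReal.tsum_mul_left, ENNReal.tsum_comm]
        exact congrArg _ (tsum_congr fun j => by rw [ENNReal.tsum_mul_right, mul_comm])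
    _ = (∑' k, A k ^ 2) * (∑' j, B j) ^ 2 := by
        have hshift (j : G) : ∑' k, A (k - j) ^ 2 = ∑' k, A k ^ 2 :=
          (Equiv.subRight j).tsum_eq fun k => A k ^ 2
        simp only [hshift, ENNReal.tsum_mul_right]
        ring

lemma discreteConv_enorm (u v : G → ℂ) (k : G) :
    discreteConv (‖u ·‖ₑ) (‖v ·‖ₑ) k = ∑' j, ‖u (k - j) * v j‖ₑ := by
  simp only [discreteConv, enorm_mul]

lemma summable_conv_of_tsum_enorm_ne_top {u v : G → ℂ} (hu : ∑' k, ‖u k‖ₑ ≠ ⊤)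
    (hv : ∑' k, ‖v k‖ₑ ≠ ⊤) (k : G) : Summable fun j => u (k - j) * v j :=
  .of_enorm <| ne_top_of_le_ne_top (ENNReal.mul_ne_top hu hv)
    (discreteConv_enorm u v k ▸ discreteConv_le_tsum_mul_tsum _ _ k)

end Convolution

lemma ENNReal.rpow_le_two_rpow_mul_add {a b c : ℝ≥0∞} {s : ℝ} (hs : 0 ≤ s) (h : c ≤ a + b) :
    c ^ s ≤ 2 ^ s * (a ^ s + b ^ s) :=
  calc c ^ s ≤ (2 * max a b) ^ s :=
        ENNReal.rpow_le_rpow (h.trans (two_mul (max a b) ▸ add_le_add (le_max_left _ _)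
          (le_max_right _ _))) hs
    _ = 2 ^ s * max a b ^ s := ENNReal.mul_rpow_of_nonneg _ _ hs
    _ ≤ 2 ^ s * (a ^ s + b ^ s) := by
        gcongr
        rcases le_total a b with hab | hab
        · exact (max_eq_right hab).symm ▸ le_add_self
        · exact (max_eq_left hab).symm ▸ le_self_add

lemma wgt_eq_max_enorm {n : ℕ} (k : Fin n → ℤ) : wgt k = max 1 ‖k‖ₑ := by
  rw [wgt, ← ENNReal.coe_natCast, Nat.cast_max, Nat.cast_finsetSup, enorm_eq_nnnorm,
    Pi.nnnorm_def]
  simp only [NNReal.natCast_natAbs, Nat.cast_one, ENNReal.coe_max, ENNReal.coe_one]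

lemma one_le_wgt {n : ℕ} (k : Fin n → ℤ) : 1 ≤ wgt k :=
  (wgt_eq_max_enorm k).symm ▸ le_max_left _ _

lemma wgt_le_wgt_sub_add_wgt {n : ℕ} (k j : Fin n → ℤ) : wgt k ≤ wgt (k - j) + wgt j := by
  simp only [wgt_eq_max_enorm]
  refine max_le (le_add_right (le_max_left _ _)) ?_
  calc ‖k‖ₑ = ‖k - j + j‖ₑ := by rw [sub_add_cancel]
    _ ≤ ‖k - j‖ₑ + ‖j‖ₑ := enorm_add_le _ _
    _ ≤ _ := add_le_add (le_max_right _ _) (le_max_right _ _)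

-- `ℤ^ι` is the standard lattice in `ℝ^ι`, for which lattice `p`-series are known to converge.
lemma summable_norm_rpow_of_lt_neg {ι : Type*} [Fintype ι] {r : ℝ} (hr : r < -Fintype.card ι) :
    Summable fun k : ι → ℤ => ‖k‖ ^ r := by
  let L := Submodule.span ℤ (Set.range (Pi.basisFun ℝ ι))
  have hL : Module.finrank ℤ L = Fintype.card ι := by
    rw [ZLattice.rank ℝ L, Module.finrank_fintype_fun_eq_card]
  let e : (ι → ℤ) → L := fun k => ⟨fun i => (k i : ℝ), by
    rw [(Pi.basisFun ℝ ι).mem_span_iff_repr_mem ℤ]; intro i; simp⟩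
  have he : Function.Injective e := fun k k' h => by
    ext i; simpa [e] using congrFun (congrArg Subtype.val h) i
  have hne : ∀ k, ‖e k‖ = ‖k‖ := fun k => by
    change ‖fun i => (k i : ℝ)‖ = ‖k‖
    simp only [Pi.norm_def]
    congr 2
  exact ((ZLattice.summable_norm_rpow L r (hL ▸ hr)).comp_injective he).congr fun k => by
    simp only [Function.comp, hne]

lemma one_le_norm_of_ne_zero {ι : Type*} [Fintype ι] {k : ι → ℤ} (hk : k ≠ 0) : 1 ≤ ‖k‖ := by
  obtain ⟨i, hi⟩ := Function.ne_iff.mp hk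
  calc (1 : ℝ) ≤ ‖k i‖ := by rw [Int.norm_eq_abs]; exact_mod_cast Int.one_le_abs hi
    _ ≤ ‖k‖ := norm_le_pi_norm k i

lemma tsum_wgt_rpow_neg_lt_top {n : ℕ} {p : ℝ} (hp : (n : ℝ) < p) :
    ∑' k : Fin n → ℤ, wgt k ^ (-p) < ⊤ := by
  have hwgt : ∀ k : Fin n → ℤ, wgt k ^ (-p) = ENNReal.ofReal (max 1 ‖k‖ ^ (-p)) := fun k => by
    rw [wgt_eq_max_enorm, ← ofReal_norm, ← ENNReal.ofReal_one, ← ENNReal.ofReal_max,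
      ENNReal.ofReal_rpow_of_pos (by positivity)]
  have hsum : Summable fun k : Fin n → ℤ => max 1 ‖k‖ ^ (-p) := by
    refine ((summable_norm_rpow_of_lt_neg (r := -p) (by simpa using hp)).update 0 1).congr
      fun k => ?_
    rcases eq_or_ne k 0 with rfl | hk
    · simp
    · rw [Function.update_of_ne hk, max_eq_right (one_le_norm_of_ne_zero hk)]
  simp only [hwgt]
  rw [← ENNReal.ofReal_tsum_of_nonneg (fun k => by positivity) hsum]
  exact ENNReal.ofReal_lt_top

lemma ell2Norm_wgt_rpow_neg_lt_top {n : ℕ} {t : ℝ} (ht : (n : ℝ) < 2 * t) :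
    ell2Norm (fun k : Fin n → ℤ => wgt k ^ (-t)) < ⊤ := by
  have h := tsum_wgt_rpow_neg_lt_top ht
  rw [← ENNReal.pow_lt_top_iff (n := 2) |>.trans (or_iff_left two_ne_zero), ell2Norm_sq]
  simpa only [← ENNReal.rpow_natCast, ← ENNReal.rpow_mul, Nat.cast_ofNat, neg_mul, mul_comm]
    using h

lemma one_le_ell2Norm_wgt_rpow {n : ℕ} (t : ℝ) :
    1 ≤ ell2Norm (fun k : Fin n → ℤ => wgt k ^ t) := by
  have h0 : wgt (0 : Fin n → ℤ) = 1 := by simp [wgt]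
  simpa [h0] using le_ell2Norm (fun k : Fin n → ℤ => wgt k ^ t) 0

section WeightedNorm

variable {n : ℕ}

lemma wnorm_eq_ell2Norm (s : ℝ) (u : (Fin n → ℤ) → ℂ) :
    wnorm n s u = ell2Norm fun k => wgt k ^ s * ‖u k‖ₑ := by
  refine congrArg (· ^ (1 / 2 : ℝ)) (tsum_congr fun k => ?_)
  rw [mul_pow, ← ENNReal.rpow_mul_natCast, enorm_eq_nnnorm, Nat.cast_ofNat, mul_comm s]

lemma wnorm_mono {t₀ t : ℝ} (h : t₀ ≤ t) (u : (Fin n → ℤ) → ℂ) :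
    wnorm n t₀ u ≤ wnorm n t u := by
  simp only [wnorm_eq_ell2Norm]
  exact ell2Norm_mono fun k =>
    mul_le_mul_left (ENNReal.rpow_le_rpow_of_exponent_le (one_le_wgt k) h) _

lemma tsum_enorm_le_mul_wnorm (t : ℝ) (u : (Fin n → ℤ) → ℂ) :
    ∑' k, ‖u k‖ₑ ≤ ell2Norm (fun k : Fin n → ℤ => wgt k ^ (-t)) * wnorm n t u := by
  have hwgt0 (k : Fin n → ℤ) : wgt k ≠ 0 := (zero_lt_one.trans_le (one_le_wgt k)).ne'
  have hwgt_top (k : Fin n → ℤ) : wgt k ≠ ⊤ := ENNReal.natCast_ne_top _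
  calc ∑' k, ‖u k‖ₑ = ∑' k, wgt k ^ (-t) * (wgt k ^ t * ‖u k‖ₑ) := by
        refine tsum_congr fun k => ?_
        rw [← mul_assoc, ← ENNReal.rpow_add _ _ (hwgt0 k) (hwgt_top k), neg_add_cancel,
          ENNReal.rpow_zero, one_mul]
    _ ≤ _ := (tsum_mul_le_ell2Norm_mul _ _).trans_eq (by rw [wnorm_eq_ell2Norm])

lemma wgt_rpow_mul_discreteConv_le {s : ℝ} (hs : 0 ≤ s) (A B : (Fin n → ℤ) → ℝ≥0∞)
    (k : Fin n → ℤ) :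
    wgt k ^ s * discreteConv A B k ≤
      2 ^ s * (discreteConv (fun j => wgt j ^ s * A j) B k +
        discreteConv A (fun j => wgt j ^ s * B j) k) :=
  calc wgt k ^ s * discreteConv A B k = ∑' j, wgt k ^ s * (A (k - j) * B j) :=
        ENNReal.tsum_mul_left.symm
    _ ≤ ∑' j, 2 ^ s * (wgt (k - j) ^ s * A (k - j) * B j + A (k - j) * (wgt j ^ s * B j)) :=
        ENNReal.tsum_le_tsum fun j => by
          calc wgt k ^ s * (A (k - j) * B j)
              ≤ 2 ^ s * (wgt (k - j) ^ s + wgt j ^ s) * (A (k - j) * B j) :=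
                mul_le_mul_left (ENNReal.rpow_le_two_rpow_mul_add hs
                  (wgt_le_wgt_sub_add_wgt k j)) _
            _ = _ := by ring
    _ = _ := by rw [ENNReal.tsum_mul_left, ENNReal.tsum_add]; rfl

lemma wnorm_conv_le {s : ℝ} (hs : 0 ≤ s) (u v : (Fin n → ℤ) → ℂ) :
    wnorm n s (fun k => ∑' j, u (k - j) * v j) ≤
      2 ^ s * (wnorm n s u * ∑' k, ‖v k‖ₑ + (∑' k, ‖u k‖ₑ) * wnorm n s v) := by
  set U : (Fin n → ℤ) → ℝ≥0∞ := (‖u ·‖ₑ)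
  set V : (Fin n → ℤ) → ℝ≥0∞ := (‖v ·‖ₑ)
  have hpt (k : Fin n → ℤ) : wgt k ^ s * ‖∑' j, u (k - j) * v j‖ₑ ≤
      2 ^ s * (discreteConv (fun j => wgt j ^ s * U j) V k +
        discreteConv U (fun j => wgt j ^ s * V j) k) :=
    (mul_le_mul_right (enorm_tsum_le_tsum_enorm.trans_eq (discreteConv_enorm u v k).symm) _).trans
      (wgt_rpow_mul_discreteConv_le hs U V k)
  calc wnorm n s (fun k => ∑' j, u (k - j) * v j)
      ≤ 2 ^ s * ell2Norm (discreteConv (fun j => wgt j ^ s * U j) V +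
          discreteConv U (fun j => wgt j ^ s * V j)) :=
        (wnorm_eq_ell2Norm s _).trans_le <| (ell2Norm_mono hpt).trans_eq (ell2Norm_const_mul _ _)
    _ ≤ 2 ^ s * (ell2Norm (discreteConv (fun j => wgt j ^ s * U j) V) +
          ell2Norm (discreteConv (fun j => wgt j ^ s * V j) U)) := by
        rw [discreteConv_comm U]
        gcongr
        exact ell2Norm_add_le _ _
    _ ≤ 2 ^ s * (wnorm n s u * ∑' k, V k + wnorm n s v * ∑' k, U k) := by
        simp only [wnorm_eq_ell2Norm]
        gcongr <;> exact ell2Norm_discreteConv_le _ _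
    _ = _ := by rw [mul_comm (wnorm n s v)]

end WeightedNorm

theorem asymmetric_tame_product_general (n : ℕ) (s s₀ : ℝ)
    (hs₀ : (n : ℝ) / 2 < s₀) (hs : s₀ ≤ s) :
    ∃ C₀ C : ℝ, 0 < C₀ ∧ 0 < C ∧
      ∀ u v : (Fin n → ℤ) → ℂ, wnorm n s u < ⊤ → wnorm n s v < ⊤ →
        (∀ k : Fin n → ℤ, Summable fun k' : Fin n → ℤ => u (k - k') * v k') ∧
        wnorm n s (fun k => ∑' k' : Fin n → ℤ, u (k - k') * v k') ≤
          ENNReal.ofReal C₀ * wnorm n s u * wnorm n s₀ v +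
            ENNReal.ofReal C * wnorm n s₀ u * wnorm n s v := by
  set K := ell2Norm fun k : Fin n → ℤ => wgt k ^ (-s₀)
  have hK_top : K ≠ ⊤ := (ell2Norm_wgt_rpow_neg_lt_top (by linarith)).ne
  have hs_nonneg : 0 ≤ s := by linarith [show (0 : ℝ) ≤ n / 2 by positivity]
  set D : ℝ≥0∞ := 2 ^ s * K
  have hD_top : D ≠ ⊤ :=
    ENNReal.mul_ne_top (ENNReal.rpow_ne_top_of_nonneg hs_nonneg ENNReal.ofNat_ne_top) hK_top
  have hD_pos : 0 < D.toReal := ENNReal.toReal_pos (mul_ne_zero (ENNReal.rpow_pos two_pos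
    ENNReal.ofNat_ne_top).ne' (zero_lt_one.trans_le (one_le_ell2Norm_wgt_rpow _)).ne') hD_top
  refine ⟨D.toReal, D.toReal, hD_pos, hD_pos, fun u v hu hv => ?_⟩
  have hl1 (w : (Fin n → ℤ) → ℂ) (hw : wnorm n s w < ⊤) : ∑' k, ‖w k‖ₑ ≠ ⊤ :=
    ((tsum_enorm_le_mul_wnorm s₀ w).trans_lt
      (ENNReal.mul_lt_top hK_top.lt_top ((wnorm_mono hs w).trans_lt hw))).ne
  refine ⟨summable_conv_of_tsum_enorm_ne_top (hl1 u hu) (hl1 v hv), ?_⟩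
  rw [ENNReal.ofReal_toReal hD_top]
  calc _ ≤ 2 ^ s * (wnorm n s u * ∑' k, ‖v k‖ₑ + (∑' k, ‖u k‖ₑ) * wnorm n s v) :=
        wnorm_conv_le hs_nonneg u v
    _ ≤ 2 ^ s * (wnorm n s u * (K * wnorm n s₀ v) + K * wnorm n s₀ u * wnorm n s v) := by
        gcongr <;> exact tsum_enorm_le_mul_wnorm s₀ _
    _ = D * wnorm n s u * wnorm n s₀ v + D * wnorm n s₀ u * wnorm n s v := by ring

/-- Asymmetric tame product estimate in Fourier-coefficient (convolution) form:
for `s ≥ s₀ > n/2` there are constants `C(s₀), C(s)` such that for all `u, v` with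
finite `s`-norms the convolution `u∗v` is well defined and
`‖u∗v‖ₛ ≤ C(s₀)‖u‖ₛ‖v‖_{s₀} + C(s)‖u‖_{s₀}‖v‖ₛ`. -/
theorem asymmetric_tame_product (n : ℕ) (hn : 1 ≤ n) (s s₀ : ℝ)
    (hs₀ : (n : ℝ) / 2 < s₀) (hs : s₀ ≤ s) :
    ∃ C₀ C : ℝ, 0 < C₀ ∧ 0 < C ∧
      ∀ u v : (Fin n → ℤ) → ℂ, wnorm n s u < ⊤ → wnorm n s v < ⊤ →
        (∀ k : Fin n → ℤ, Summable fun k' : Fin n → ℤ => u (k - k') * v k') ∧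
        wnorm n s (fun k => ∑' k' : Fin n → ℤ, u (k - k') * v k') ≤
          ENNReal.ofReal C₀ * wnorm n s u * wnorm n s₀ v +
            ENNReal.ofReal C * wnorm n s₀ u * wnorm n s v :=
  asymmetric_tame_product_general n s s₀ hs₀ hs
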